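/- arXiv:1708.05634 — 2 statements merged into one kernel-verified Lean document; each statement's English description precedes it below -/
import Mathlib

section
/- Let θ > 0, let k be a positive integer, and let G be geometric on ℕ₀ with success probability k/(k+θ), i.e. P(G = m) = (k/(k+θ)) · (θ/(k+θ))^m. Then for every positive integer i, the i-th cumulant of G equals Li_{1-i}(θ/(k+θ)) = ∑_{b=1}^{i} S(i, b) · (θ/k)^b · (b-1)!, where S(i, b) is the Stirling number of the second kind. -/
/-
The fibres of `G` carry total mass one, which already forces `G` to be a.e.-measurable, so
its law is the geometric measure with `p = k/(k+θ)`, `q = 1 - p = θ/(k+θ)`. Near `0` its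
cgf is `log p - log (1 - q eᵗ)`, and differentiating `-log (1 - q eᵗ) = ∑_{l ≥ 1} (q eᵗ)ˡ / l`
term by term gives `Li_{-j}(q eᵗ)` as the `(j+1)`-st derivative. For the Stirling form,
expand `(l+1)^j = ∑_b S(j+1, b+1) l^{(b)}` in falling factorials and sum
`∑_l l^{(b)} q^{l+1} = b! (q/(1-q))^{b+1}`; finally `q/(1-q) = θ/k`.
-/

open MeasureTheory ProbabilityTheory

def stirling2 : ℕ → ℕ → ℕ
  | 0, 0 => 0 + 1
  | 0, _ + 1 => 0
  | _ + 1, 0 => 0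
  | n + 1, k + 1 => (k + 1) * stirling2 n (k + 1) + stirling2 n k

theorem stirling2_eq_stirlingSecond : stirling2 = Nat.stirlingSecond := by
  funext n b
  induction n generalizing b with
  | zero => cases b <;> rfl
  | succ n ih =>
    cases b with
    | zero => rfl
    | succ b => rw [stirling2, Nat.stirlingSecond_succ_succ, ih, ih]

namespace Nat

open Finset

theorem mul_descFactorial_eq_descFactorial_succ_add (m b : ℕ) :
    m * m.descFactorial b = m.descFactorial (b + 1) + b * m.descFactorial b := by
  rcases le_or_gt b m with h | h
  · rw [descFactorial_succ, ← add_mul, Nat.sub_add_cancel h]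
  · rw [descFactorial_eq_zero_iff_lt.2 h, descFactorial_eq_zero_iff_lt.2 (by omega)]
    simp

theorem pow_eq_sum_stirlingSecond_mul_descFactorial (n m : ℕ) :
    m ^ n = ∑ b ∈ range (n + 1), stirlingSecond n b * m.descFactorial b := by
  induction n with
  | zero => simp
  | succ n ih =>
    have hshift :
        ∑ b ∈ range (n + 1), (b + 1) * stirlingSecond n (b + 1) * m.descFactorial (b + 1)
          = ∑ b ∈ range (n + 1), stirlingSecond n b * (b * m.descFactorial b) := by
      let f b := b * stirlingSecond n b * m.descFactorial b
      calc ∑ b ∈ range (n + 1), f (b + 1) = ∑ b ∈ range (n + 2), f b := by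
            simp [f, sum_range_succ' f (n + 1)]
        _ = ∑ b ∈ range (n + 1), f b := by
            simp [f, sum_range_succ f (n + 1), stirlingSecond_eq_zero_of_lt n.lt_succ_self]
        _ = _ := sum_congr rfl fun b _ => by ring
    rw [pow_succ', ih, mul_sum,
      sum_range_succ' (fun b => stirlingSecond (n + 1) b * m.descFactorial b),
      stirlingSecond_succ_zero, zero_mul, add_zero]
    simp only [stirlingSecond_succ_succ, Nat.add_mul _ _ (m.descFactorial _), sum_add_distrib,
      hshift]
    rw [← sum_add_distrib]
    refine sum_congr rfl fun b _ => ?_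
    rw [mul_left_comm, mul_descFactorial_eq_descFactorial_succ_add]
    ring

theorem succ_pow_eq_sum_stirlingSecond_mul_descFactorial (n l : ℕ) :
    (l + 1) ^ n = ∑ b ∈ range (n + 1), stirlingSecond (n + 1) (b + 1) * l.descFactorial b := by
  refine Nat.eq_of_mul_eq_mul_left (by positivity : 0 < l + 1) ?_
  rw [← pow_succ', pow_eq_sum_stirlingSecond_mul_descFactorial,
    sum_range_succ' (fun b => stirlingSecond (n + 1) b * (l + 1).descFactorial b),
    stirlingSecond_succ_zero, zero_mul, add_zero, mul_sum]
  refine sum_congr rfl fun b _ => ?_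
  rw [succ_descFactorial_succ]
  ring

end Nat

section NegPolylog

open Real

/-- `Li_{-j}(z) = ∑_{l ≥ 1} l ^ j z ^ l`, indexed from `l + 1` so that no `0 ^ 0` term
occurs. -/
noncomputable def negPolylog (j : ℕ) (z : ℝ) : ℝ :=
  ∑' l : ℕ, ((l : ℝ) + 1) ^ j * z ^ (l + 1)

theorem summable_negPolylog (j : ℕ) {z : ℝ} (hz : |z| < 1) :
    Summable fun l : ℕ => ((l : ℝ) + 1) ^ j * z ^ (l + 1) := by
  have h := (summable_pow_mul_geometric_of_norm_lt_one j (r := z) hz).comp_injective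
    (add_left_injective 1)
  exact h.congr fun l => by simp

theorem negPolylog_zero {z : ℝ} (hz : |z| < 1) : negPolylog 0 z = z / (1 - z) := by
  simp_rw [negPolylog, pow_zero, one_mul, pow_succ', tsum_mul_left,
    tsum_geometric_of_abs_lt_one hz, div_eq_mul_inv]

open Finset Nat in
theorem hasSum_descFactorial_mul_pow_succ (b : ℕ) {z : ℝ} (hz : |z| < 1) :
    HasSum (fun l : ℕ => (l.descFactorial b : ℝ) * z ^ (l + 1))
      (b ! * (z / (1 - z)) ^ (b + 1)) := by
  have hlow : ∑ l ∈ range b, (l.descFactorial b : ℝ) * z ^ (l + 1) = 0 :=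
    sum_eq_zero fun l hl => by simp [descFactorial_eq_zero_iff_lt.2 (mem_range.1 hl)]
  rw [← hasSum_nat_add_iff' b, hlow, sub_zero]
  have hchoose := (hasSum_choose_mul_geometric_of_norm_lt_one b hz).mul_left (b ! * z ^ (b + 1))
  rw [div_pow, ← mul_one_div (z ^ (b + 1)), ← mul_assoc]
  refine hchoose.congr_fun fun n => ?_
  rw [descFactorial_eq_factorial_mul_choose]
  push_cast
  ring

open Finset Nat in
theorem negPolylog_eq_sum_stirlingSecond (n : ℕ) {z : ℝ} (hz : |z| < 1) :
    negPolylog n z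
      = ∑ b ∈ Icc 1 (n + 1), (stirlingSecond (n + 1) b : ℝ) * (z / (1 - z)) ^ b * (b - 1)! := by
  have hsum := hasSum_sum fun b (_ : b ∈ range (n + 1)) =>
    (hasSum_descFactorial_mul_pow_succ b hz).mul_left (stirlingSecond (n + 1) (b + 1) : ℝ)
  rw [← Ico_add_one_right_eq_Icc, sum_Ico_eq_sum_range, add_tsub_cancel_right, negPolylog]
  convert hsum.tsum_eq using 1
  · refine tsum_congr fun l => ?_
    rw [← Nat.cast_add_one, ← Nat.cast_pow, succ_pow_eq_sum_stirlingSecond_mul_descFactorial]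
    push_cast
    rw [sum_mul]
    exact sum_congr rfl fun b _ => by ring
  · exact sum_congr rfl fun b _ => by rw [add_comm 1 b, add_tsub_cancel_right]; ring

theorem hasDerivAt_neg_log_one_sub_mul_exp {q t : ℝ} (ht : |q| * exp t < 1) :
    HasDerivAt (fun u => -log (1 - q * exp u)) (negPolylog 0 (q * exp t)) t := by
  have hqt : |q * exp t| < 1 := by rwa [abs_mul, abs_of_pos (exp_pos t)]
  have hpos : 0 < 1 - q * exp t := by linarith [le_abs_self (q * exp t)]
  rw [negPolylog_zero hqt]
  refine (((((hasDerivAt_exp t).const_mul q).const_sub 1).log hpos.ne').neg).congr_deriv ?_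
  ring

theorem hasDerivAt_negPolylog_mul_exp {q s : ℝ} (hs : |q| * exp s < 1) (j : ℕ) {t : ℝ}
    (ht : t < s) :
    HasDerivAt (fun u => negPolylog j (q * exp u)) (negPolylog (j + 1) (q * exp t)) t := by
  have hterm (l : ℕ) (u : ℝ) : HasDerivAt (fun u => ((l : ℝ) + 1) ^ j * (q * exp u) ^ (l + 1))
      (((l : ℝ) + 1) ^ (j + 1) * (q * exp u) ^ (l + 1)) u := by
    refine ((((hasDerivAt_exp u).const_mul q).pow (l + 1)).const_mul
      (((l : ℝ) + 1) ^ j)).congr_deriv ?_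
    push_cast
    ring
  have hbound (l : ℕ) (u : ℝ) (hu : u ∈ Set.Iio s) :
      ‖((l : ℝ) + 1) ^ (j + 1) * (q * exp u) ^ (l + 1)‖
        ≤ ((l : ℝ) + 1) ^ (j + 1) * (|q| * exp s) ^ (l + 1) := by
    rw [norm_mul, norm_pow, norm_pow, Real.norm_eq_abs, Real.norm_eq_abs, abs_mul,
      abs_of_pos (exp_pos u), abs_of_nonneg (by positivity : (0 : ℝ) ≤ (l : ℝ) + 1)]
    gcongr
    exact hu.le
  have hr : |(|q| * exp s)| < 1 := by rwa [abs_of_nonneg (by positivity)]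
  have hqt : |q * exp t| < 1 := by
    rw [abs_mul, abs_of_pos (exp_pos t)]
    exact lt_of_le_of_lt (by gcongr) hs
  exact hasDerivAt_tsum_of_isPreconnected (summable_negPolylog (j + 1) hr) isOpen_Iio
    isPreconnected_Iio (fun l u _ => hterm l u) hbound ht (summable_negPolylog j hqt) ht

theorem iteratedDeriv_neg_log_one_sub_mul_exp {q s : ℝ} (hs : |q| * exp s < 1) (j : ℕ)
    {t : ℝ} (ht : t < s) :
    iteratedDeriv (j + 1) (fun u => -log (1 - q * exp u)) t = negPolylog j (q * exp t) := by
  induction j generalizing t with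
  | zero =>
    rw [iteratedDeriv_one]
    exact (hasDerivAt_neg_log_one_sub_mul_exp (lt_of_le_of_lt (by gcongr) hs)).deriv
  | succ j ih =>
    rw [iteratedDeriv_succ,
      (Filter.eventuallyEq_of_mem (Iio_mem_nhds ht) fun u hu => ih hu).deriv_eq]
    exact (hasDerivAt_negPolylog_mul_exp hs j ht).deriv

end NegPolylog

namespace MeasureTheory

open Set

variable {α β : Type*} [MeasurableSpace α] {μ : Measure α}

theorem nullMeasurableSet_of_measure_add_measure_compl_le [IsFiniteMeasure μ] {s : Set α}
    (h : μ s + μ sᶜ ≤ μ univ) : NullMeasurableSet s μ := by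
  set t := toMeasurable μ s
  have ht : MeasurableSet t := measurableSet_toMeasurable μ s
  have hst : s ⊆ t := subset_toMeasurable μ s
  have hcompl : μ sᶜ = μ (t \ s) + μ tᶜ := by
    have hdiff : sᶜ \ t = tᶜ := by
      ext x
      exact ⟨And.right, fun hx => ⟨fun hs => hx (hst hs), hx⟩⟩
    rw [← measure_inter_add_sdiff sᶜ ht, inter_comm, ← Set.sdiff_eq, hdiff]
  have hnull : μ (t \ s) = 0 := by
    have hsplit : μ s + μ tᶜ = μ univ := by
      rw [← measure_add_measure_compl ht, measure_toMeasurable]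
    rw [hcompl, ← add_assoc, add_right_comm, hsplit] at h
    exact le_antisymm (ENNReal.le_of_add_le_add_left (measure_ne_top μ univ)
      (by simpa using h)) zero_le
  rw [← sdiff_sdiff_cancel_left hst]
  exact ht.nullMeasurableSet.diff (.of_null hnull)

variable [MeasurableSpace β] [Countable β]

theorem aemeasurable_of_tsum_measure_preimage_singleton_le [IsFiniteMeasure μ] {f : α → β}
    (h : ∑' b, μ (f ⁻¹' {b}) ≤ μ univ) : AEMeasurable f μ := by
  have hfiber (b : β) : NullMeasurableSet (f ⁻¹' {b}) μ := by
    refine nullMeasurableSet_of_measure_add_measure_compl_le (le_trans ?_ h)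
    rw [← ENNReal.summable.tsum_add_tsum_compl (s := {b}) ENNReal.summable,
      tsum_singleton b fun c => μ (f ⁻¹' {c}), ← preimage_compl]
    gcongr
    simpa only [biUnion_preimage_singleton] using
      measure_biUnion_le μ (to_countable {b}ᶜ) fun c => f ⁻¹' {c}
  refine NullMeasurable.aemeasurable fun s _ => ?_
  rw [← biUnion_preimage_singleton]
  exact .biUnion (to_countable s) fun b _ => hfiber b

theorem Measure.map_eq_of_measure_preimage_singleton [MeasurableSingletonClass β]
    [IsFiniteMeasure μ] {ν : Measure β} {f : α → β} (h : ∀ b, μ (f ⁻¹' {b}) = ν {b})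
    (huniv : ν univ = μ univ) : μ.map f = ν := by
  have hf : AEMeasurable f μ := by
    refine aemeasurable_of_tsum_measure_preimage_singleton_le (le_of_eq ?_)
    simp_rw [h, ← huniv, ← tsum_indicator_apply_singleton ν univ MeasurableSet.univ,
      indicator_univ]
  exact Measure.ext_of_singleton fun b => by
    rw [Measure.map_apply_of_aemeasurable hf (measurableSet_singleton b), h]

end MeasureTheory

namespace ProbabilityTheory

open Real Set Filter Topology

variable {p : unitInterval}

theorem mgf_geometricMeasure (hp : p ≠ 0) {t : ℝ} (ht : (1 - p) * exp t < 1) :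
    mgf (fun n : ℕ => (n : ℝ)) (geometricMeasure p) t = p / (1 - (1 - p) * exp t) := by
  have hterm (n : ℕ) : ((1 - p : ℝ) ^ n * p) • exp (t * n) = p * ((1 - p) * exp t) ^ n := by
    rw [smul_eq_mul, mul_pow, mul_comm t, exp_nat_mul]
    ring
  have hq0 : (0 : ℝ) ≤ 1 - p := sub_nonneg.2 p.2.2
  simp_rw [mgf, integral_geometricMeasure hp, hterm, tsum_mul_left,
    tsum_geometric_of_lt_one (by positivity) ht, div_eq_mul_inv]

theorem cgf_geometricMeasure (hp : p ≠ 0) {t : ℝ} (ht : (1 - p) * exp t < 1) :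
    cgf (fun n : ℕ => (n : ℝ)) (geometricMeasure p) t = log p + -log (1 - (1 - p) * exp t) := by
  rw [cgf, mgf_geometricMeasure hp ht, log_div (unitInterval.coe_ne_zero.2 hp) (by linarith),
    sub_eq_add_neg]

theorem iteratedDeriv_cgf_geometricMeasure (hp : p ≠ 0) (j : ℕ) :
    iteratedDeriv (j + 1) (cgf (fun n : ℕ => (n : ℝ)) (geometricMeasure p)) 0
      = negPolylog j (1 - p) := by
  have hq0 : (0 : ℝ) ≤ 1 - p := sub_nonneg.2 p.2.2
  have hnear : ∀ᶠ u in 𝓝 (0 : ℝ), (1 - p) * exp u < 1 := by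
    refine (Continuous.continuousAt (by fun_prop)).eventually_lt continuousAt_const ?_
    have : (0 : ℝ) < p := unitInterval.pos_iff_ne_zero.2 hp
    simp only [exp_zero, mul_one]
    linarith
  obtain ⟨s, hs, hs0⟩ := ((hnear.filter_mono nhdsWithin_le_nhds).and self_mem_nhdsWithin).exists
    (f := 𝓝[>] (0 : ℝ))
  have hcgf : cgf (fun n : ℕ => (n : ℝ)) (geometricMeasure p)
      =ᶠ[𝓝 0] fun u => log p + -log (1 - (1 - p) * exp u) := by
    filter_upwards [Iio_mem_nhds hs0] with u hu
    exact cgf_geometricMeasure hp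
      (lt_of_le_of_lt (mul_le_mul_of_nonneg_left (exp_le_exp.2 hu.le) hq0) hs)
  rw [hcgf.iteratedDeriv_eq, iteratedDeriv_const_add j.succ_pos,
    iteratedDeriv_neg_log_one_sub_mul_exp (by rwa [abs_of_nonneg hq0]) j hs0, exp_zero, mul_one]

end ProbabilityTheory

/-- Let `G` be geometric on `ℕ` with success probability `k/(k+θ)` where `θ > 0` and `k ≥ 1`.
Then for every `i ≥ 1` the `i`-th cumulant of `G` equals
`Li_{1-i}(θ/(k+θ)) = ∑_{b=1}^{i} S(i,b) (θ/k)^b (b-1)!`. -/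
theorem geometric_cumulants {Ω : Type*} [MeasurableSpace Ω] (μ : Measure Ω)
    [IsProbabilityMeasure μ] (θ : ℝ) (hθ : 0 < θ) (k : ℕ) (hk : 1 ≤ k)
    (G : Ω → ℕ)
    (hgeom : ∀ m : ℕ,
      μ {ω | G ω = m} = ENNReal.ofReal ((k / (k + θ)) * (θ / (k + θ)) ^ m))
    (i : ℕ) (hi : 1 ≤ i) :
    iteratedDeriv i (cgf (fun ω => (G ω : ℝ)) μ) 0
        = ∑' l : ℕ, ((l : ℝ) + 1) ^ (i - 1) * (θ / (k + θ)) ^ (l + 1)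
      ∧ iteratedDeriv i (cgf (fun ω => (G ω : ℝ)) μ) 0
        = ∑ b ∈ Finset.Icc 1 i,
            (stirling2 i b : ℝ) * (θ / k) ^ b * Nat.factorial (b - 1) := by
  have hk0 : (0 : ℝ) < k := Nat.cast_pos.2 hk
  have hkθ : (0 : ℝ) < k + θ := by positivity
  let p : unitInterval := ⟨k / (k + θ), by positivity, div_le_one_of_le₀ (by linarith) hkθ.le⟩
  have hp : p ≠ 0 := unitInterval.coe_ne_zero.1 (div_pos hk0 hkθ).ne'
  have hq : (1 - p : ℝ) = θ / (k + θ) := by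
    simp only [p]
    field_simp
    ring
  have hq1 : |θ / (k + θ)| < 1 := by
    rw [abs_of_pos (by positivity), div_lt_one hkθ]
    linarith
  have hlaw : μ.map G = geometricMeasure p := by
    refine Measure.map_eq_of_measure_preimage_singleton (fun m => ?_) (by simp)
    rw [geometricMeasure_singleton hp, hq, mul_comm]
    exact hgeom m
  have hcgf :
      cgf (fun ω => (G ω : ℝ)) μ = cgf (fun n : ℕ => (n : ℝ)) (geometricMeasure p) := by
    have hG : AEMeasurable G μ := .of_map_ne_zero (hlaw ▸ IsProbabilityMeasure.ne_zero _)
    funext t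
    rw [cgf, cgf, ← hlaw, mgf_map hG .of_discrete]
    rfl
  obtain ⟨j, rfl⟩ : ∃ j, i = j + 1 := ⟨i - 1, by omega⟩
  rw [hcgf, iteratedDeriv_cgf_geometricMeasure hp j, hq, Nat.add_sub_cancel]
  refine ⟨rfl, ?_⟩
  have hratio : θ / (k + θ) / (1 - θ / (k + θ)) = θ / k := by
    rw [one_sub_div hkθ.ne', add_sub_cancel_right, div_div_div_cancel_right₀ hkθ.ne']
  rw [negPolylog_eq_sum_stirlingSecond j hq1, hratio, stirling2_eq_stirlingSecond]
end

section
/- Let θ > 0 and let (G_k)_{k≥1} be a sequence of independent random variables on a common probability space, where G_k is geometric on ℕ₀ with success probability k/(k+θ). Set S_n = ∑_{k=1}^{n-1} G_k for n ≥ 2. Then S_n/(θ H_{n-1}) → 1 almost surely as n → ∞, where H_{n-1} = ∑_{k=1}^{n-1} 1/k. -/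
/-!
Every `G_k` has mean `θ / k` and variance `θ (k + θ) / k² ≤ (1 + θ) θ / k`, so `S_n` has mean
`θ H_{n-1}` and variance at most `(1 + θ)` times its mean. Chebyshev's inequality bounds the
probability of a relative deviation `ε` by `(1 + θ) / (ε² θ H_{n-1})`. Along `n_j = 2^{j²}` we have
`H_{n_j} ≈ j² log 2`, so these bounds are summable and Borel–Cantelli gives convergence along
`n_j`. Since `S_n` and `H_n` are monotone and `H_{n_{j+1}} / H_{n_j} → 1`, the limit extends to
all `n`.

All probabilities are computed from the joint mass function of finitely many `G_k`, which
independence makes a product; Chebyshev's inequality then becomes an estimate on weighted sums.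
-/

open MeasureTheory ProbabilityTheory Filter Finset Topology

theorem Real.hasSum_mul {α β : Type*} {f : α → ℝ} {g : β → ℝ} {s t : ℝ} (hf : HasSum f s)
    (hg : HasSum g t) : HasSum (fun p : α × β => f p.1 * g p.2) (s * t) :=
  hf.mul hg (summable_mul_of_summable_norm hf.summable.abs hg.summable.abs)

structure HasMeanVariance {α : Type*} (w X : α → ℝ) (m v : ℝ) : Prop where
  nonneg : ∀ a, 0 ≤ w a
  hasSum_one : HasSum w 1
  hasSum_sub : HasSum (fun a => (X a - m) * w a) 0
  hasSum_sub_sq : HasSum (fun a => (X a - m) ^ 2 * w a) v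

namespace HasMeanVariance

variable {α β : Type*} {w X : α → ℝ} {m v : ℝ}

theorem of_comp_equiv (e : β ≃ α) (h : HasMeanVariance (w ∘ e) (X ∘ e) m v) :
    HasMeanVariance w X m v where
  nonneg a := by simpa using h.nonneg (e.symm a)
  hasSum_one := e.hasSum_iff.1 h.hasSum_one
  hasSum_sub := e.hasSum_iff.1 h.hasSum_sub
  hasSum_sub_sq := e.hasSum_iff.1 h.hasSum_sub_sq

theorem prod {w' X' : β → ℝ} {m' v' : ℝ} (h : HasMeanVariance w X m v)
    (h' : HasMeanVariance w' X' m' v') :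
    HasMeanVariance (fun p : α × β => w p.1 * w' p.2) (fun p => X p.1 + X' p.2)
      (m + m') (v + v') where
  nonneg p := mul_nonneg (h.nonneg p.1) (h'.nonneg p.2)
  hasSum_one := by simpa using Real.hasSum_mul h.hasSum_one h'.hasSum_one
  hasSum_sub := by
    convert (Real.hasSum_mul h.hasSum_sub h'.hasSum_one).add
      (Real.hasSum_mul h.hasSum_one h'.hasSum_sub) using 1
    · ext p; ring
    · ring
  hasSum_sub_sq := by
    convert ((Real.hasSum_mul h.hasSum_sub_sq h'.hasSum_one).add
      ((Real.hasSum_mul h.hasSum_sub h'.hasSum_sub).mul_left 2)).add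
      (Real.hasSum_mul h.hasSum_one h'.hasSum_sub_sq) using 1
    · ext p; ring
    · ring

theorem pi : ∀ {n : ℕ} {W X : Fin n → α → ℝ} {M V : Fin n → ℝ},
    (∀ k, HasMeanVariance (W k) (X k) (M k) (V k)) →
    HasMeanVariance (fun f : Fin n → α => ∏ k, W k (f k)) (fun f => ∑ k, X k (f k))
      (∑ k, M k) (∑ k, V k)
  | 0, W, X, M, V, _ => by
    refine ⟨fun _ => by simp, ?_, ?_, ?_⟩ <;> simp
  | n + 1, W, X, M, V, h => by
    refine of_comp_equiv (Fin.consEquiv fun _ => α) ?_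
    convert (h 0).prod (pi fun k => h k.succ) using 1 <;>
      first
      | (ext p; simp [Fin.prod_univ_succ, Fin.sum_univ_succ])
      | simp [Fin.sum_univ_succ]

theorem tsum_ofReal_le {B : Set α} (h : HasMeanVariance w X m v) {A : ℝ} (hA : 0 < A)
    (hB : ∀ a ∈ B, A ≤ |X a - m|) :
    ∑' a : B, ENNReal.ofReal (w a) ≤ ENNReal.ofReal (v / A ^ 2) := by
  have hv : HasSum (fun a => (X a - m) ^ 2 * w a / A ^ 2) (v / A ^ 2) := h.hasSum_sub_sq.div_const _
  calc ∑' a : B, ENNReal.ofReal (w a)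
      ≤ ∑' a : B, ENNReal.ofReal ((X a - m) ^ 2 * w a / A ^ 2) := by
        refine ENNReal.tsum_le_tsum fun a => ENNReal.ofReal_le_ofReal ?_
        rw [le_div_iff₀ (by positivity), mul_comm]
        refine mul_le_mul_of_nonneg_right ?_ (h.nonneg a)
        simpa [sq_abs] using pow_le_pow_left₀ hA.le (hB a a.2) 2
    _ ≤ ∑' a, ENNReal.ofReal ((X a - m) ^ 2 * w a / A ^ 2) :=
        ENNReal.tsum_comp_le_tsum_of_injective Subtype.val_injective _
    _ = ENNReal.ofReal (v / A ^ 2) := by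
        rw [← ENNReal.ofReal_tsum_of_nonneg (fun a => by have := h.nonneg a; positivity)
          hv.summable, hv.tsum_eq]

end HasMeanVariance

theorem hasMeanVariance_geometric {q : ℝ} (hq0 : 0 < q) (hq1 : q ≤ 1) :
    HasMeanVariance (fun a : ℕ => q * (1 - q) ^ a) (↑) ((1 - q) / q) ((1 - q) / q ^ 2) := by
  have hr : ‖1 - q‖ < 1 := by rw [Real.norm_eq_abs, abs_lt]; constructor <;> linarith
  have h0 : HasSum (fun a : ℕ => q * (1 - q) ^ a) 1 := by
    simpa [hq0.ne'] using (hasSum_geometric_of_norm_lt_one hr).mul_left q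
  have h1 : HasSum (fun a : ℕ => (a : ℝ) * (1 - q) ^ a) ((1 - q) / q ^ 2) := by
    simpa using hasSum_coe_mul_geometric_of_norm_lt_one hr
  have h2 : HasSum (fun a : ℕ => ((a + 2).choose 2 : ℕ) * (1 - q) ^ a) (1 / q ^ 3) := by
    simpa using hasSum_choose_mul_geometric_of_norm_lt_one 2 hr
  refine ⟨fun a => mul_nonneg hq0.le (pow_nonneg (by linarith) a), h0, ?_, ?_⟩
  · convert! (h1.mul_left q).add (h0.mul_left (-((1 - q) / q))) using 1
    · ext a; ring
    · field_simp; ring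
  · convert! ((h2.mul_left (2 * q)).add (h1.mul_left (-(3 + 2 * ((1 - q) / q)) * q))).add
      (h0.mul_left (((1 - q) / q) ^ 2 - 2)) using 1
    · ext a
      rw [Nat.cast_choose_two]
      push_cast
      ring
    · field_simp; ring

section Chebyshev

variable {Ω : Type*} [MeasurableSpace Ω] {μ : Measure Ω}

theorem measure_forall_eq_of_iIndepFun {ι : Type*} [Fintype ι] {X : ι → Ω → ℕ}
    (hX : iIndepFun X μ) {w : ι → ℕ → ℝ} (hw : ∀ i a, 0 ≤ w i a)
    (hlaw : ∀ i a, μ {ω | X i ω = a} = ENNReal.ofReal (w i a)) (f : ι → ℕ) :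
    μ {ω | ∀ i, X i ω = f i} = ENNReal.ofReal (∏ i, w i (f i)) := by
  have hcyl : {ω | ∀ i, X i ω = f i} = ⋂ i, X i ⁻¹' {f i} := by ext; simp
  rw [hcyl, hX.meas_iInter fun i => ⟨{f i}, trivial, rfl⟩,
    ENNReal.ofReal_prod_of_nonneg fun i _ => hw i (f i)]
  exact prod_congr rfl fun i _ => hlaw i (f i)

theorem measure_le_abs_sum_sub_le {n : ℕ} {X : Fin n → Ω → ℕ} (hX : iIndepFun X μ)
    {W : Fin n → ℕ → ℝ} {M V : Fin n → ℝ}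
    (hlaw : ∀ k a, μ {ω | X k ω = a} = ENNReal.ofReal (W k a))
    (hmv : ∀ k, HasMeanVariance (W k) (↑) (M k) (V k)) {A : ℝ} (hA : 0 < A) :
    μ {ω | A ≤ |∑ k, (X k ω : ℝ) - ∑ k, M k|} ≤ ENNReal.ofReal ((∑ k, V k) / A ^ 2) := by
  set B : Set (Fin n → ℕ) := {f | A ≤ |∑ k, (f k : ℝ) - ∑ k, M k|}
  have hcover : {ω | A ≤ |∑ k, (X k ω : ℝ) - ∑ k, M k|} ⊆ ⋃ f : B, {ω | ∀ k, X k ω = f.1 k} :=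
    fun ω hω => Set.mem_iUnion.2 ⟨⟨fun k => X k ω, hω⟩, fun _ => rfl⟩
  calc μ {ω | A ≤ |∑ k, (X k ω : ℝ) - ∑ k, M k|}
      ≤ ∑' f : B, μ {ω | ∀ k, X k ω = f.1 k} := (measure_mono hcover).trans (measure_iUnion_le _)
    _ = ∑' f : B, ENNReal.ofReal (∏ k, W k (f.1 k)) := by
        simp only [measure_forall_eq_of_iIndepFun hX (fun k => (hmv k).nonneg) hlaw]
    _ ≤ ENNReal.ofReal ((∑ k, V k) / A ^ 2) :=
        (HasMeanVariance.pi hmv).tsum_ofReal_le hA fun _ hf => hf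

theorem measure_le_abs_sum_range_sub_le {X : ℕ → Ω → ℕ} (hX : iIndepFun X μ)
    {W : ℕ → ℕ → ℝ} {M V : ℕ → ℝ}
    (hlaw : ∀ k a, μ {ω | X k ω = a} = ENNReal.ofReal (W k a))
    (hmv : ∀ k, HasMeanVariance (W k) (↑) (M k) (V k)) (n : ℕ) {A : ℝ} (hA : 0 < A) :
    μ {ω | A ≤ |∑ k ∈ range n, (X k ω : ℝ) - ∑ k ∈ range n, M k|} ≤
      ENNReal.ofReal ((∑ k ∈ range n, V k) / A ^ 2) := by
  simpa only [sum_range] using measure_le_abs_sum_sub_le (n := n)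
    (hX.precomp Fin.val_injective) (fun k => hlaw k) (fun k => hmv k) hA

theorem ae_tendsto_sum_range_div_of_summable_inv {X : ℕ → Ω → ℕ} (hX : iIndepFun X μ)
    {W : ℕ → ℕ → ℝ} {M V : ℕ → ℝ}
    (hlaw : ∀ k a, μ {ω | X k ω = a} = ENNReal.ofReal (W k a))
    (hmv : ∀ k, HasMeanVariance (W k) (↑) (M k) (V k)) {C : ℝ} (hV : ∀ k, V k ≤ C * M k)
    {c : ℕ → ℕ} (hpos : ∀ j, 0 < ∑ k ∈ range (c j), M k)
    (hsum : Summable fun j => (∑ k ∈ range (c j), M k)⁻¹) :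
    ∀ᵐ ω ∂μ, Tendsto (fun j => (∑ k ∈ range (c j), (X k ω : ℝ)) / ∑ k ∈ range (c j), M k)
      atTop (𝓝 1) := by
  set s : ℕ → ℝ := fun j => ∑ k ∈ range (c j), M k
  set S : ℕ → Ω → ℝ := fun j ω => ∑ k ∈ range (c j), (X k ω : ℝ)
  have hdev : ∀ m j : ℕ, μ {ω | s j / (m + 1) ≤ |S j ω - s j|} ≤
      ENNReal.ofReal (C * (m + 1) ^ 2 * (s j)⁻¹) := by
    intro m j
    have hs := hpos j
    have hVs : ∑ k ∈ range (c j), V k ≤ C * s j := by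
      rw [mul_sum]; exact sum_le_sum fun k _ => hV k
    refine (measure_le_abs_sum_range_sub_le hX hlaw hmv (c j) (by positivity)).trans
      (ENNReal.ofReal_le_ofReal ?_)
    calc (∑ k ∈ range (c j), V k) / (s j / (m + 1)) ^ 2 ≤ C * s j / (s j / (m + 1)) ^ 2 := by
          gcongr
      _ = C * (m + 1) ^ 2 * (s j)⁻¹ := by field_simp
  have hae : ∀ᵐ ω ∂μ, ∀ m : ℕ, ∀ᶠ j in atTop, |S j ω - s j| < s j / (m + 1) := by
    refine ae_all_iff.2 fun m => ?_
    have hfin : ∑' j, μ {ω | s j / (m + 1) ≤ |S j ω - s j|} ≠ ⊤ :=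
      ne_top_of_le_ne_top (hsum.mul_left _).tsum_ofReal_ne_top (ENNReal.tsum_le_tsum (hdev m))
    filter_upwards [ae_eventually_notMem hfin] with ω hω
    simpa only [not_le] using hω
  filter_upwards [hae] with ω hω
  refine Metric.tendsto_nhds.2 fun ε hε => ?_
  obtain ⟨m, hm⟩ := exists_nat_one_div_lt hε
  filter_upwards [hω m] with j hj
  have hs := hpos j
  rw [Real.dist_eq, div_sub_one hs.ne', abs_div, abs_of_pos hs, div_lt_iff₀ hs]
  calc |S j ω - s j| < s j / (m + 1) := hj
    _ = 1 / (m + 1) * s j := by ring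
    _ < ε * s j := by gcongr

end Chebyshev

theorem tendsto_div_of_monotone_of_subseq {S a : ℕ → ℝ} {l : ℝ} (hS : Monotone S)
    (hS0 : ∀ n, 0 ≤ S n) (ha : Monotone a) {c : ℕ → ℕ} (hc : StrictMono c) (ha0 : 0 < a (c 0))
    (hratio : Tendsto (fun j => a (c (j + 1)) / a (c j)) atTop (𝓝 1))
    (hlim : Tendsto (fun j => S (c j) / a (c j)) atTop (𝓝 l)) :
    Tendsto (fun n => S n / a n) atTop (𝓝 l) := by
  have hapos : ∀ n, c 0 ≤ n → 0 < a n := fun n hn => ha0.trans_le (ha hn)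
  have hacpos : ∀ j, 0 < a (c j) := fun j => hapos _ (hc.monotone j.zero_le)
  -- `J n` is the last index with `c (J n) ≤ n`; it suffices to search below `n` as `j ≤ c j`.
  set J : ℕ → ℕ := fun n => Nat.findGreatest (fun j => c j ≤ n) n
  have hJ_le : ∀ n, c 0 ≤ n → c (J n) ≤ n := fun n hn =>
    Nat.findGreatest_spec (P := fun j => c j ≤ n) n.zero_le hn
  have hlt_J : ∀ n, n < c (J n + 1) := fun n => by
    by_contra! h
    exact Nat.findGreatest_is_greatest (lt_add_one _) ((hc.id_le _).trans h) h
  have hJ : Tendsto J atTop atTop := tendsto_atTop_atTop.2 fun b =>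
    ⟨max (c b) b, fun n hn => Nat.le_findGreatest (le_of_max_le_right hn) (le_of_max_le_left hn)⟩
  have hlower : Tendsto (fun j => S (c j) / a (c (j + 1))) atTop (𝓝 l) := by
    have := hlim.mul (hratio.inv₀ one_ne_zero)
    rw [inv_one, mul_one] at this
    refine this.congr fun j => ?_
    have := (hacpos j).ne'
    field_simp
  have hupper : Tendsto (fun j => S (c (j + 1)) / a (c j)) atTop (𝓝 l) := by
    have := (hlim.comp (tendsto_add_atTop_nat 1)).mul hratio
    rw [mul_one] at this
    refine this.congr fun j => ?_
    have := (hacpos (j + 1)).ne'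
    simp only [Function.comp_apply]
    field_simp
  refine tendsto_of_tendsto_of_tendsto_of_le_of_le' (hlower.comp hJ) (hupper.comp hJ) ?_ ?_ <;>
    filter_upwards [eventually_ge_atTop (c 0)] with n hn
  · exact div_le_div₀ (hS0 n) (hS (hJ_le n hn)) (hapos n hn) (ha (hlt_J n).le)
  · exact div_le_div₀ (hS0 _) (hS (hlt_J n).le) (hacpos _) (ha (hJ_le n hn))

section Harmonic

open Real

theorem harmonic_mono : Monotone harmonic :=
  monotone_nat_of_le_succ fun n => by
    rw [harmonic_succ]; exact le_add_of_nonneg_right (by positivity)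

theorem mul_log_two_le_harmonic_two_pow (a : ℕ) : a * log 2 ≤ harmonic (2 ^ a) := by
  calc a * log 2 = log ((2 ^ a : ℕ) : ℝ) := by push_cast; rw [log_pow]
    _ ≤ log ((2 ^ a + 1 : ℕ) : ℝ) := log_le_log (by positivity) (by push_cast; linarith)
    _ ≤ harmonic (2 ^ a) := log_add_one_le_harmonic _

theorem harmonic_two_pow_le (a : ℕ) : harmonic (2 ^ a) ≤ 1 + a * log 2 := by
  simpa [log_pow] using harmonic_le_one_add_log (2 ^ a)

theorem summable_inv_harmonic_two_pow_sq :
    Summable fun j : ℕ => ((harmonic (2 ^ (j ^ 2)) : ℝ))⁻¹ := by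
  refine (summable_nat_add_iff 1).1 ?_
  have hsum : Summable fun j : ℕ => (log 2)⁻¹ * (((j + 1 : ℕ) : ℝ) ^ 2)⁻¹ :=
    ((summable_nat_add_iff 1).2 (summable_nat_pow_inv.2 one_lt_two)).mul_left _
  refine hsum.of_nonneg_of_le (fun j => inv_nonneg.2 (mod_cast (harmonic_pos (by positivity)).le))
    fun j => ?_
  rw [← mul_inv]
  have := mul_log_two_le_harmonic_two_pow ((j + 1) ^ 2)
  push_cast at this ⊢
  gcongr
  linarith

theorem tendsto_harmonic_two_pow_sq_ratio :
    Tendsto (fun j : ℕ => (harmonic (2 ^ ((j + 1) ^ 2)) : ℝ) / harmonic (2 ^ (j ^ 2))) atTop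
      (𝓝 1) := by
  have hL : 0 < log 2 := log_pos one_lt_two
  set K := (1 + 3 * log 2) / log 2 with hK_def
  have hK : Tendsto (fun j : ℕ => 1 + K / j) atTop (𝓝 1) := by
    simpa using (tendsto_const_div_atTop_nhds_zero_nat K).const_add 1
  refine tendsto_of_tendsto_of_tendsto_of_le_of_le' tendsto_const_nhds hK
    (Eventually.of_forall fun j => ?_) ?_
  · rw [one_le_div (mod_cast harmonic_pos (by positivity))]
    exact_mod_cast harmonic_mono (Nat.pow_le_pow_right two_pos (by gcongr; omega))
  · filter_upwards [eventually_ge_atTop 1] with j hj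
    have hlo := mul_log_two_le_harmonic_two_pow (j ^ 2)
    have hhi := harmonic_two_pow_le ((j + 1) ^ 2)
    rw [div_le_iff₀ (mod_cast harmonic_pos (by positivity))]
    set h : ℝ := (harmonic (2 ^ (j ^ 2)) : ℝ)
    have hj : (1 : ℝ) ≤ j := mod_cast hj
    push_cast at hlo hhi
    calc _ ≤ 1 + ((j : ℝ) + 1) ^ 2 * log 2 := hhi
      _ ≤ h + (j : ℝ) ^ 2 * log 2 * K / j := by
        rw [show (j : ℝ) ^ 2 * log 2 * K / j = j * (1 + 3 * log 2) by rw [hK_def]; field_simp]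
        nlinarith
      _ ≤ h + h * K / j := by gcongr
      _ = (1 + K / j) * h := by ring

end Harmonic

theorem hasMeanVariance_geometric_div_add {x θ : ℝ} (hx : 0 < x) (hθ : 0 ≤ θ) :
    HasMeanVariance (fun a : ℕ => x / (x + θ) * (θ / (x + θ)) ^ a) (↑) (θ / x)
      (θ * (x + θ) / x ^ 2) := by
  have hxθ : 0 < x + θ := by positivity
  have h := hasMeanVariance_geometric (q := x / (x + θ)) (by positivity)
    (div_le_one_of_le₀ (by linarith) hxθ.le)
  rw [show 1 - x / (x + θ) = θ / (x + θ) by field_simp; ring] at h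
  convert h using 1 <;> field_simp

theorem Finset.sum_Icc_one_eq_sum_range {M : Type*} [AddCommMonoid M] (f : ℕ → M) (n : ℕ) :
    ∑ k ∈ Icc 1 n, f k = ∑ k ∈ range n, f (k + 1) := by
  rw [range_eq_Ico, sum_Ico_add' f 0 n 1, zero_add, Ico_add_one_right_eq_Icc]

theorem segregating_sites_lln_general {Ω : Type*} [MeasurableSpace Ω] (μ : Measure Ω)
    (θ : ℝ) (hθ : 0 < θ)
    (G : ℕ → Ω → ℕ)
    (hindep : iIndepFun (fun k => G (k + 1)) μ)
    (hgeom : ∀ k : ℕ, 1 ≤ k → ∀ m : ℕ,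
      μ {ω | G k ω = m} = ENNReal.ofReal ((k / (k + θ)) * (θ / (k + θ)) ^ m)) :
    ∀ᵐ ω ∂μ, Tendsto
      (fun n : ℕ => ((∑ k ∈ Finset.Icc 1 (n - 1), G k ω : ℕ) : ℝ)
        / (θ * ∑ k ∈ Finset.Icc 1 (n - 1), 1 / (k : ℝ)))
      atTop (nhds 1) := by
  have hlaw (k a : ℕ) : μ {ω | G (k + 1) ω = a} =
      ENNReal.ofReal ((k + 1) / (k + 1 + θ) * (θ / (k + 1 + θ)) ^ a) := by
    rw [hgeom (k + 1) (Nat.le_add_left 1 k)]; push_cast; rfl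
  have hmv (k : ℕ) := hasMeanVariance_geometric_div_add (x := k + 1) (by positivity) hθ.le
  have hvar (k : ℕ) : θ * (k + 1 + θ) / (k + 1) ^ 2 ≤ (1 + θ) * (θ / (k + 1)) := by
    rw [div_le_iff₀ (by positivity)]
    field_simp
    nlinarith [mul_nonneg hθ.le (k.cast_nonneg : (0 : ℝ) ≤ k)]
  have hmean (n : ℕ) : ∑ k ∈ range n, θ / ((k : ℝ) + 1) = θ * harmonic n := by
    simp [harmonic, mul_sum, div_eq_mul_inv]
  have hpos (j : ℕ) : 0 < θ * (harmonic (2 ^ (j ^ 2)) : ℝ) :=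
    mul_pos hθ (mod_cast harmonic_pos (by positivity))
  have hsub := ae_tendsto_sum_range_div_of_summable_inv hindep hlaw hmv hvar
    (c := fun j => 2 ^ (j ^ 2)) (by simpa only [hmean] using hpos)
    (by simpa only [hmean, mul_inv] using summable_inv_harmonic_two_pow_sq.mul_left θ⁻¹)
  filter_upwards [hsub] with ω hω
  simp only [hmean] at hω
  have hfull := tendsto_div_of_monotone_of_subseq
    (S := fun n => ∑ k ∈ range n, (G (k + 1) ω : ℝ)) (a := fun n => θ * (harmonic n : ℝ))
    (monotone_nat_of_le_succ fun n => by simp [sum_range_succ]) (fun n => by positivity)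
    (fun m n hmn => mul_le_mul_of_nonneg_left (mod_cast harmonic_mono hmn) hθ.le)
    (fun i j hij => Nat.pow_lt_pow_right one_lt_two (Nat.pow_lt_pow_left hij two_ne_zero)) (hpos 0)
    (by simpa only [mul_div_mul_left _ _ hθ.ne'] using tendsto_harmonic_two_pow_sq_ratio) hω
  refine (hfull.comp (tendsto_sub_atTop_nat 1)).congr fun n => ?_
  simp [sum_Icc_one_eq_sum_range, harmonic_eq_sum_Icc]

/-- Law of Large Numbers for the number of segregating sites: if `(G_k)_{k ≥ 1}` are
independent, `G_k` geometric on `ℕ` with success probability `k/(k+θ)`, and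
`S_n = ∑_{k=1}^{n-1} G_k`, then `S_n/(θ H_{n-1}) → 1` almost surely. -/
theorem segregating_sites_lln {Ω : Type*} [MeasurableSpace Ω] (μ : Measure Ω)
    [IsProbabilityMeasure μ] (θ : ℝ) (hθ : 0 < θ)
    (G : ℕ → Ω → ℕ)
    (hindep : iIndepFun (fun k => G (k + 1)) μ)
    (hgeom : ∀ k : ℕ, 1 ≤ k → ∀ m : ℕ,
      μ {ω | G k ω = m} = ENNReal.ofReal ((k / (k + θ)) * (θ / (k + θ)) ^ m)) :
    ∀ᵐ ω ∂μ, Tendsto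
      (fun n : ℕ => ((∑ k ∈ Finset.Icc 1 (n - 1), G k ω : ℕ) : ℝ)
        / (θ * ∑ k ∈ Finset.Icc 1 (n - 1), 1 / (k : ℝ)))
      atTop (nhds 1) :=
  segregating_sites_lln_general μ θ hθ G hindep hgeom
end
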